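/- arXiv:2506.00224 — 4 statements merged into one kernel-verified Lean document; each statement's English description precedes it below -/
import Mathlib

section
/- Let p₁, p₂, p₃ = (0,0), p₄ be points in ℝ² with x₁ < 0, x₂ < 0, and x₄ > 0 (where x_i denotes the x-coordinate of p_i). If σ(p₁,p₂,p₃) = -1 and σ(p₂,p₃,p₄) = -1, then σ(p₃,p₄,p₁) = -1. -/
lemma sign_neg_iff {r : ℝ} : Real.sign r = -1 ↔ r < 0 := by
  constructor
  · intro h
    rcases lt_trichotomy r 0 with h'|h'|h'
    · exact h'
    · simp [h', Real.sign_zero] at h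
    · rw [Real.sign_of_pos h'] at h; norm_num at h
  · exact Real.sign_of_neg

noncomputable def tripleSign (p q r : ℝ × ℝ) : ℝ :=
  Real.sign (Matrix.det !![p.1, q.1, r.1; p.2, q.2, r.2; 1, 1, 1])

theorem dynamic_axiom_two_case (p₁ p₂ p₃ p₄ : ℝ × ℝ)
    (h3 : p₃ = (0, 0)) (h1 : p₁.1 < 0) (h2 : p₂.1 < 0) (h4 : 0 < p₄.1)
    (h123 : tripleSign p₁ p₂ p₃ = -1) (h234 : tripleSign p₂ p₃ p₄ = -1) :
    tripleSign p₃ p₄ p₁ = -1 := by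
  subst h3
  unfold tripleSign at *
  norm_num [Matrix.det_fin_three, Matrix.cons_val_two, Matrix.vecHead, Matrix.vecTail] at *
  rw [sign_neg_iff] at h123 h234 ⊢
  nlinarith [mul_pos h4 (neg_pos.mpr h2), sq_nonneg p₂.1]
end

section
/- For every finite set S of n points in the plane in general position with pairwise distinct x-coordinates, the assignment setting a_{i,j,k} true iff σ(p_i,p_j,p_k) = 1 and setting ≺_{i,j} true iff x_i < x_j satisfies the dynamic-ordering axioms: (≺_{i,j} ∧ ≺_{i,k} ∧ ≺_{i,ℓ}) → (a_{i,j,k} ∨ ¬a_{i,j,ℓ} ∨ a_{i,k,ℓ}) and (≺_{i,k} ∧ ≺_{j,k} ∧ ≺_{k,ℓ}) → (a_{i,j,k} ∨ ¬a_{i,k,ℓ} ∨ a_{j,k,ℓ}), for all distinct indices i,j,k,ℓ. -/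
lemma sign_eq_one_iff' {x : ℝ} : Real.sign x = 1 ↔ 0 < x := by
  constructor
  · intro h
    rcases lt_trichotomy x 0 with h' | h' | h'
    · rw [Real.sign_of_neg h'] at h; norm_num at h
    · rw [h', Real.sign_zero] at h; norm_num at h
    · exact h'
  · exact Real.sign_of_pos

def Dv (p q r : ℝ × ℝ) : ℝ :=
  (q.1 - p.1) * (r.2 - p.2) - (r.1 - p.1) * (q.2 - p.2)

lemma tripleSign_eq (p q r : ℝ × ℝ) : tripleSign p q r = Real.sign (Dv p q r) := by
  unfold tripleSign Dv
  congr 1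
  rw [Matrix.det_fin_three]
  simp [Matrix.cons_val_zero, Matrix.cons_val_one]
  ring

theorem dynamic_ordering_axioms {n : ℕ} (p : Fin n → ℝ × ℝ)
    (hgp : ∀ i j k : Fin n, i ≠ j → i ≠ k → j ≠ k → tripleSign (p i) (p j) (p k) ≠ 0)
    (hx : ∀ i j : Fin n, i ≠ j → (p i).1 ≠ (p j).1) :
    ∀ i j k ℓ : Fin n, i ≠ j → i ≠ k → i ≠ ℓ → j ≠ k → j ≠ ℓ → k ≠ ℓ →
      (((p i).1 < (p j).1 ∧ (p i).1 < (p k).1 ∧ (p i).1 < (p ℓ).1) →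
        (tripleSign (p i) (p j) (p k) = 1 ∨ ¬ tripleSign (p i) (p j) (p ℓ) = 1 ∨
          tripleSign (p i) (p k) (p ℓ) = 1)) ∧
      (((p i).1 < (p k).1 ∧ (p j).1 < (p k).1 ∧ (p k).1 < (p ℓ).1) →
        (tripleSign (p i) (p j) (p k) = 1 ∨ ¬ tripleSign (p i) (p k) (p ℓ) = 1 ∨
          tripleSign (p j) (p k) (p ℓ) = 1)) := by
  intro i j k ℓ hij hik hiℓ hjk hjℓ hkℓ
  have hpos : ∀ a b c : Fin n, tripleSign (p a) (p b) (p c) = 1 ↔ 0 < Dv (p a) (p b) (p c) := by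
    intro a b c; rw [tripleSign_eq]; exact sign_eq_one_iff'
  have hneg : ∀ a b c : Fin n, a ≠ b → a ≠ c → b ≠ c →
      ¬ tripleSign (p a) (p b) (p c) = 1 → Dv (p a) (p b) (p c) < 0 := by
    intro a b c hab hac hbc h
    have h0 : Dv (p a) (p b) (p c) ≠ 0 := by
      intro h0
      exact hgp a b c hab hac hbc (by rw [tripleSign_eq, h0, Real.sign_zero])
    rcases lt_trichotomy (Dv (p a) (p b) (p c)) 0 with h' | h' | h'
    · exact h'
    · exact absurd h' h0
    · exact absurd ((hpos a b c).2 h') h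
  constructor
  · rintro ⟨h1, h2, h3⟩
    by_contra hcon
    push_neg at hcon
    obtain ⟨ha, hb, hc⟩ := hcon
    have Da := hneg i j k hij hik hjk ha
    have Db := (hpos i j ℓ).1 hb
    have Dc := hneg i k ℓ hik hiℓ hkℓ hc
    have hid : ((p ℓ).1 - (p i).1) * Dv (p i) (p j) (p k) =
        ((p k).1 - (p i).1) * Dv (p i) (p j) (p ℓ) -
        ((p j).1 - (p i).1) * Dv (p i) (p k) (p ℓ) := by
      unfold Dv; ring
    nlinarith [mul_neg_of_pos_of_neg (by linarith : (0:ℝ) < (p ℓ).1 - (p i).1) Da,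
      mul_pos (by linarith : (0:ℝ) < (p k).1 - (p i).1) Db,
      mul_neg_of_pos_of_neg (by linarith : (0:ℝ) < (p j).1 - (p i).1) Dc]
  · rintro ⟨h1, h2, h3⟩
    by_contra hcon
    push_neg at hcon
    obtain ⟨ha, hb, hc⟩ := hcon
    have Da := hneg i j k hij hik hjk ha
    have Db := (hpos i k ℓ).1 hb
    have Dc := hneg j k ℓ hjk hjℓ hkℓ hc
    have hid : ((p i).1 - (p k).1) * Dv (p j) (p k) (p ℓ) =
        ((p ℓ).1 - (p k).1) * Dv (p i) (p j) (p k) +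
        ((p j).1 - (p k).1) * Dv (p i) (p k) (p ℓ) := by
      unfold Dv; ring
    nlinarith [mul_pos_of_neg_of_neg (by linarith : (p i).1 - (p k).1 < 0) Dc,
      mul_neg_of_pos_of_neg (by linarith : (0:ℝ) < (p ℓ).1 - (p k).1) Da,
      mul_neg_of_neg_of_pos (by linarith : (p j).1 - (p k).1 < 0) Db]
end

section
/- For every finite set S of n points in the plane in general position with pairwise distinct x-coordinates, labeled so that x₁ < x₂ < ... < x_n, the orientation assignment satisfies the signotope axioms: for all 1 ≤ i < j < k < ℓ ≤ n, (¬a_{i,j,k} ∨ ¬a_{i,k,ℓ} ∨ a_{i,j,ℓ}) ∧ (a_{i,j,k} ∨ a_{i,k,ℓ} ∨ ¬a_{i,j,ℓ}) and (¬a_{i,j,k} ∨ ¬a_{j,k,ℓ} ∨ a_{i,k,ℓ}) ∧ (a_{i,j,k} ∨ a_{j,k,ℓ} ∨ ¬a_{i,k,ℓ}), where a_{i,j,k} denotes σ(p_i,p_j,p_k) = 1. -/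
lemma sign_eq_one_iff_pos {x : ℝ} (hx : x ≠ 0) : Real.sign x = 1 ↔ 0 < x := by
  constructor
  · intro h
    rcases lt_trichotomy x 0 with h1 | h1 | h1
    · rw [Real.sign_of_neg h1] at h; norm_num at h
    · exact absurd h1 hx
    · exact h1
  · exact Real.sign_of_pos

lemma not_sign_eq_one_iff_neg {x : ℝ} (hx : x ≠ 0) : ¬ Real.sign x = 1 ↔ x < 0 := by
  rw [sign_eq_one_iff_pos hx, not_lt]
  exact ⟨fun h => lt_of_le_of_ne h hx, le_of_lt⟩

lemma key_combo {a b c u v w : ℝ} (hu : 0 < u) (hv : 0 < v) (hw : 0 < w)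
    (h : u * c = v * a + w * b) :
    ((0 < a → 0 < b → 0 < c) ∧ (a < 0 → b < 0 → c < 0)) := by
  constructor
  · intro ha hb; nlinarith
  · intro ha hb; nlinarith

lemma det3_eq (p q r : ℝ × ℝ) :
    Matrix.det !![p.1, q.1, r.1; p.2, q.2, r.2; 1, 1, 1] =
      p.1 * (q.2 - r.2) - q.1 * (p.2 - r.2) + r.1 * (p.2 - q.2) := by
  simp [Matrix.det_fin_three]; ring

theorem signotope_axioms {n : ℕ} (p : Fin n → ℝ × ℝ)
    (hgp : ∀ i j k : Fin n, i ≠ j → i ≠ k → j ≠ k → tripleSign (p i) (p j) (p k) ≠ 0)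
    (hmono : ∀ i j : Fin n, i < j → (p i).1 < (p j).1) :
    ∀ i j k ℓ : Fin n, i < j → j < k → k < ℓ →
      ((¬ tripleSign (p i) (p j) (p k) = 1 ∨ ¬ tripleSign (p i) (p k) (p ℓ) = 1 ∨
          tripleSign (p i) (p j) (p ℓ) = 1) ∧
        (tripleSign (p i) (p j) (p k) = 1 ∨ tripleSign (p i) (p k) (p ℓ) = 1 ∨
          ¬ tripleSign (p i) (p j) (p ℓ) = 1)) ∧
      ((¬ tripleSign (p i) (p j) (p k) = 1 ∨ ¬ tripleSign (p j) (p k) (p ℓ) = 1 ∨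
          tripleSign (p i) (p k) (p ℓ) = 1) ∧
        (tripleSign (p i) (p j) (p k) = 1 ∨ tripleSign (p j) (p k) (p ℓ) = 1 ∨
          ¬ tripleSign (p i) (p k) (p ℓ) = 1)) := by
  intro i j k ℓ hij hjk hkl
  set D : Fin n → Fin n → Fin n → ℝ := fun a b c =>
    Matrix.det !![(p a).1, (p b).1, (p c).1; (p a).2, (p b).2, (p c).2; 1, 1, 1] with hD
  have hsign : ∀ a b c : Fin n, tripleSign (p a) (p b) (p c) = Real.sign (D a b c) := by
    intro a b c; rfl
  have hne : ∀ a b c : Fin n, a ≠ b → a ≠ c → b ≠ c → D a b c ≠ 0 := by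
    intro a b c h1 h2 h3 h0
    have := hgp a b c h1 h2 h3
    rw [hsign, h0, Real.sign_zero] at this
    exact this rfl
  have hijk := hne i j k hij.ne (hij.trans hjk).ne hjk.ne
  have hikl := hne i k ℓ (hij.trans hjk).ne ((hij.trans hjk).trans hkl).ne hkl.ne
  have hijl := hne i j ℓ hij.ne ((hij.trans hjk).trans hkl).ne (hjk.trans hkl).ne
  have hjkl := hne j k ℓ hjk.ne (hjk.trans hkl).ne hkl.ne
  have hx1 := hmono i j hij
  have hx2 := hmono j k hjk
  have hx3 := hmono k ℓ hkl
  have id1 : ((p k).1 - (p i).1) * D i j ℓ =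
      ((p ℓ).1 - (p i).1) * D i j k + ((p j).1 - (p i).1) * D i k ℓ := by
    simp only [hD, det3_eq]; ring
  have id2 : ((p k).1 - (p j).1) * D i k ℓ =
      ((p ℓ).1 - (p k).1) * D i j k + ((p k).1 - (p i).1) * D j k ℓ := by
    simp only [hD, det3_eq]; ring
  have h1 := key_combo (by linarith) (by linarith) (by linarith) id1
  have h2 := key_combo (by linarith) (by linarith) (by linarith) id2
  simp only [hsign, sign_eq_one_iff_pos hijk, sign_eq_one_iff_pos hikl,
    sign_eq_one_iff_pos hijl, sign_eq_one_iff_pos hjkl]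
  constructor
  · constructor
    · by_cases ha : 0 < D i j k
      · by_cases hb : 0 < D i k ℓ
        · exact Or.inr (Or.inr (h1.1 ha hb))
        · exact Or.inr (Or.inl hb)
      · exact Or.inl ha
    · by_cases ha : 0 < D i j k
      · exact Or.inl ha
      · by_cases hb : 0 < D i k ℓ
        · exact Or.inr (Or.inl hb)
        · refine Or.inr (Or.inr ?_)
          have := h1.2 (lt_of_le_of_ne (not_lt.mp ha) hijk) (lt_of_le_of_ne (not_lt.mp hb) hikl)
          exact not_lt.mpr this.le
  · constructor
    · by_cases ha : 0 < D i j k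
      · by_cases hb : 0 < D j k ℓ
        · exact Or.inr (Or.inr (h2.1 ha hb))
        · exact Or.inr (Or.inl hb)
      · exact Or.inl ha
    · by_cases ha : 0 < D i j k
      · exact Or.inl ha
      · by_cases hb : 0 < D j k ℓ
        · exact Or.inr (Or.inl hb)
        · refine Or.inr (Or.inr ?_)
          have := h2.2 (lt_of_le_of_ne (not_lt.mp ha) hijk) (lt_of_le_of_ne (not_lt.mp hb) hjkl)
          exact not_lt.mpr this.le
end

section
/- A finite set S of points in ℝ² in general position with |S| ≥ 4 is in convex position if and only if every 4-element subset of S is in convex position. -/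
def inConvexPosition (S : Set (ℝ × ℝ)) : Prop :=
  ∀ a ∈ S, convexHull ℝ (S \ {a}) ≠ convexHull ℝ S

/-- A point of `A` is redundant iff it lies in the hull of the rest. -/
lemma hull_diff_eq_iff {A : Set (ℝ × ℝ)} {a : ℝ × ℝ} (ha : a ∈ A) :
    convexHull ℝ (A \ {a}) = convexHull ℝ A ↔ a ∈ convexHull ℝ (A \ {a}) := by
  constructor
  · intro h
    rw [h]
    exact subset_convexHull ℝ A ha
  · intro h
    refine le_antisymm (convexHull_mono Set.diff_subset) ?_
    apply convexHull_min ?_ (convex_convexHull ℝ _)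
    intro x hx
    by_cases hxa : x = a
    · exact hxa ▸ h
    · exact subset_convexHull ℝ _ ⟨hx, hxa⟩

lemma det_zero_of_mem_segment {p q r : ℝ × ℝ} (h : r ∈ segment ℝ p q) :
    Matrix.det !![p.1, q.1, r.1; p.2, q.2, r.2; 1, 1, 1] = 0 := by
  obtain ⟨u, v, hu, hv, huv, hr⟩ := h
  have h1 : u * p.1 + v * q.1 = r.1 := congrArg Prod.fst hr
  have h2 : u * p.2 + v * q.2 = r.2 := congrArg Prod.snd hr
  have hd : Matrix.det !![p.1, q.1, r.1; p.2, q.2, r.2; 1, 1, 1] =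
      p.1 * (q.2 - r.2) - q.1 * (p.2 - r.2) + r.1 * (p.2 - q.2) := by
    simp [Matrix.det_fin_three]; ring
  rw [hd]
  linear_combination (q.2 - p.2) * h1 + (p.1 - q.1) * h2 + (q.1 * p.2 - p.1 * q.2) * huv

theorem convex_position_iff_four_subsets (S : Finset (ℝ × ℝ))
    (hgp : ∀ a b c : ℝ × ℝ, a ∈ S → b ∈ S → c ∈ S →
      a ≠ b → a ≠ c → b ≠ c → tripleSign a b c ≠ 0)
    (hcard : 4 ≤ S.card) :
    inConvexPosition ↑S ↔ ∀ T ⊆ S, T.card = 4 → inConvexPosition ↑T := by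
  constructor
  · intro hS T hTS _ a haT
    intro heq
    have haS : a ∈ (S : Set (ℝ × ℝ)) := hTS haT
    have hmem : a ∈ convexHull ℝ ((T : Set (ℝ × ℝ)) \ {a}) :=
      (hull_diff_eq_iff haT).1 heq
    have hmem' : a ∈ convexHull ℝ ((S : Set (ℝ × ℝ)) \ {a}) :=
      convexHull_mono (Set.diff_subset_diff_left (by exact_mod_cast hTS)) hmem
    exact hS a haS ((hull_diff_eq_iff haS).2 hmem')
  · intro h4
    intro a haS heq
    have haS' : a ∈ S := by exact_mod_cast haS
    have hmem : a ∈ convexHull ℝ ((S : Set (ℝ × ℝ)) \ {a}) :=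
      (hull_diff_eq_iff haS).1 heq
    rw [convexHull_eq_union] at hmem
    simp only [Set.mem_iUnion] at hmem
    obtain ⟨t, hts, hai, hat⟩ := hmem
    have hanot : a ∉ t := fun h => (hts h).2 rfl
    have htS : ∀ x ∈ t, x ∈ S := fun x hx => by exact_mod_cast (hts hx).1
    have hcard3 : t.card ≤ 3 := by
      have := hai.card_le_finrank_succ
      have hle : Module.finrank ℝ (vectorSpan ℝ (Set.range ((↑) : t → ℝ × ℝ))) ≤
          Module.finrank ℝ (ℝ × ℝ) := Submodule.finrank_le _
      simp only [Fintype.card_coe] at this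
      have : t.card ≤ Module.finrank ℝ (ℝ × ℝ) + 1 := this.trans (by omega)
      simpa using this
    -- rule out small t
    interval_cases hc : t.card
    · simp [Finset.card_eq_zero.1 hc] at hat
    · obtain ⟨b, hb⟩ := Finset.card_eq_one.1 hc
      rw [hb] at hat
      simp at hat
      exact hanot (by rw [hb]; simp [hat])
    · obtain ⟨b, c, hbc, hbc'⟩ := Finset.card_eq_two.1 hc
      rw [hbc'] at hat
      rw [Finset.coe_insert, Finset.coe_singleton, convexHull_pair] at hat
      have hdet := det_zero_of_mem_segment hat
      have hbS : b ∈ S := htS b (by rw [hbc']; simp)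
      have hcS : c ∈ S := htS c (by rw [hbc']; simp)
      have hab : b ≠ a := fun h => hanot (by rw [hbc', h]; simp)
      have hac : c ≠ a := fun h => hanot (by rw [hbc', h]; simp)
      exact hgp b c a hbS hcS haS' hbc hab hac (by simp [tripleSign, hdet])
    · -- main case: t has 3 points
      set T : Finset (ℝ × ℝ) := insert a t with hT
      have hTS : T ⊆ S := by
        intro x hx
        rcases Finset.mem_insert.1 hx with h | h
        · exact h ▸ haS'
        · exact htS x h
      have hTcard : T.card = 4 := by
        rw [hT, Finset.card_insert_of_notMem hanot, hc]
      have hTset : (T : Set (ℝ × ℝ)) \ {a} = (t : Set (ℝ × ℝ)) := by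
        ext x
        simp only [hT, Finset.coe_insert, Set.mem_diff, Set.mem_insert_iff,
          Set.mem_singleton_iff, Finset.mem_coe]
        constructor
        · rintro ⟨h | h, hne⟩
          · exact absurd h hne
          · exact h
        · intro h
          exact ⟨Or.inr h, fun e => hanot (e ▸ h)⟩
      refine h4 T hTS hTcard a (by simp [hT]) ?_
      rw [hTset]
      refine le_antisymm (convexHull_mono ?_) ?_
      · intro x hx
        rw [hT, Finset.coe_insert]
        exact Set.mem_insert_of_mem _ hx
      · apply convexHull_min ?_ (convex_convexHull ℝ _)
        rw [hT, Finset.coe_insert]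
        exact Set.insert_subset hat (subset_convexHull ℝ _)
end
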